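/- If a continuous map p : E → B has the unique path homotopically lifting property (uphl), then p has the unique path lifting property (upl). -/
import Mathlib

universe u

open scoped unitInterval

/-- `p` has the unique path homotopically lifting property (uphl). -/
def Uphl {E B : Type*} [TopologicalSpace E] [TopologicalSpace B] (p : C(E, B)) : Prop :=
  ∀ α β : C(unitInterval, E), α 0 = β 0 →
    (p.comp α).HomotopicRel (p.comp β) {0, 1} →
    α.HomotopicRel β {0, 1}

/-- `p` has the unique path lifting property (upl). -/
def Upl {E B : Type*} [TopologicalSpace E] [TopologicalSpace B] (p : C(E, B)) : Prop :=
  ∀ α β : C(unitInterval, E), α 0 = β 0 → p.comp α = p.comp β → α = β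

theorem uphl_implies_upl {E B : Type*} [TopologicalSpace E] [TopologicalSpace B]
    (p : C(E, B)) (h : Uphl p) :
    Upl p := by
  intro α β h0 hp
  ext t
  -- consider reparametrized paths s ↦ α (s * t)
  let m : C(unitInterval, unitInterval) := ⟨fun s => s * t, by continuity⟩
  have hm0 : m 0 = 0 := by simp [m]
  have hm1 : m 1 = t := by simp [m]
  have hcomp : p.comp (α.comp m) = p.comp (β.comp m) := by
    rw [← ContinuousMap.comp_assoc, ← ContinuousMap.comp_assoc, hp]
  have h0' : (α.comp m) 0 = (β.comp m) 0 := by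
    simp [ContinuousMap.comp_apply, hm0, h0]
  have hrel : (α.comp m).HomotopicRel (β.comp m) {0, 1} :=
    h _ _ h0' (hcomp ▸ ContinuousMap.HomotopicRel.refl _)
  obtain ⟨H⟩ := hrel
  have h1 : (α.comp m) 1 = (β.comp m) 1 := by
    have e1 := H.eq_fst 1 (show (1 : unitInterval) ∈ ({0, 1} : Set unitInterval) by simp)
    have e2 := H.apply_one 1
    rw [e2] at e1
    exact e1.symm
  simpa [ContinuousMap.comp_apply, hm1] using h1
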